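/- arXiv:1603.00254 — 4 statements merged into one kernel-verified Lean document; each statement's English description precedes it below -/
import Mathlib

section
/- If G is a graph on n vertices with maximum degree at most n/4, then G is switching-minimal. -/
open SimpleGraph Finset

variable {V : Type*}

/-- The Seidel switch of a graph `G` on the vertex set `A`: pairs with exactly one
endpoint in `A` have their adjacency complemented. -/
def Seidel (G : SimpleGraph V) (A : Finset V) : SimpleGraph V where
  Adj x y := x ≠ y ∧ (G.Adj x y ↔ (x ∈ A ↔ y ∈ A))
  symm := by
    constructor
    rintro x y ⟨hne, h⟩
    exact ⟨hne.symm, (G.adj_comm y x).trans (h.trans Iff.comm)⟩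
  loopless := by
    constructor
    rintro x ⟨hne, _⟩
    exact hne rfl

instance Seidel.decidableAdj [DecidableEq V] (G : SimpleGraph V) [DecidableRel G.Adj]
    (A : Finset V) : DecidableRel (Seidel G A).Adj := fun x y => by
  unfold Seidel
  infer_instance

/-- `eCross G A` is the number of edges of `G` with exactly one endpoint in `A`. -/
def eCross [Fintype V] [DecidableEq V] (G : SimpleGraph V) [DecidableRel G.Adj]
    (A : Finset V) : ℕ :=
  (G.edgeFinset.filter (fun e => ∃ x ∈ A, ∃ y, y ∉ A ∧ e = s(x, y))).card

/-- `G` is switching-minimal if no switch of `G` has fewer edges than `G`. -/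
def SwitchMinimal [Fintype V] [DecidableEq V] (G : SimpleGraph V) [DecidableRel G.Adj] : Prop :=
  ∀ A : Finset V, G.edgeFinset.card ≤ (Seidel G A).edgeFinset.card

/-!
Switching on `A` turns the cut `A × Aᶜ` into its complement and leaves all other pairs alone,
so the switched graph has `|E| + |A| |Aᶜ| - 2 e(A, Aᶜ)` edges. Every cut edge has an endpoint on
either side, so `e(A, Aᶜ)` is at most `n/4` times the size of the smaller side, which is at most
`|A| |Aᶜ| / 2` because the larger side has at least `n/2` vertices.
-/

open scoped symmDiff

theorem Finset.card_symmDiff_add_two_mul_card_inter {α : Type*} [DecidableEq α]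
    (s t : Finset α) : #(s ∆ t) + 2 * #(s ∩ t) = #s + #t := by
  have hs := card_sdiff_add_card_inter s t
  have ht := card_sdiff_add_card_inter t s
  rw [inter_comm] at ht
  rw [symmDiff_def, sup_eq_union, card_union_of_disjoint disjoint_sdiff_sdiff]
  omega

theorem Nat.two_mul_le_mul_of_four_mul_le {a b x : ℕ} (ha : 4 * x ≤ a * (a + b))
    (hb : 4 * x ≤ b * (a + b)) : 2 * x ≤ a * b := by
  rcases le_total a b with hab | hab <;> nlinarith

section Switching

variable [Fintype V] [DecidableEq V]

section CutPairs

def cutPairs (A : Finset V) : Finset (Sym2 V) :=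
  (A ×ˢ Aᶜ).image fun p => s(p.1, p.2)

variable (A : Finset V)

theorem mem_cutPairs {e : Sym2 V} : e ∈ cutPairs A ↔ ∃ x ∈ A, ∃ y, y ∉ A ∧ e = s(x, y) := by
  simp [cutPairs, eq_comm, and_assoc]

theorem mk_mem_cutPairs {x y : V} : s(x, y) ∈ cutPairs A ↔ ¬(x ∈ A ↔ y ∈ A) := by
  rw [mem_cutPairs]
  constructor
  · rintro ⟨a, ha, b, hb, hab⟩
    rcases Sym2.eq_iff.1 hab with ⟨rfl, rfl⟩ | ⟨rfl, rfl⟩ <;> tauto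
  · intro h
    by_cases hx : x ∈ A
    · exact ⟨x, hx, y, by tauto, rfl⟩
    · exact ⟨y, by tauto, x, hx, Sym2.eq_swap⟩

theorem cutPairs_compl : cutPairs Aᶜ = cutPairs A := by
  ext e
  induction e using Sym2.ind with
  | _ x y => simp only [mk_mem_cutPairs, mem_compl]; tauto

theorem card_cutPairs : #(cutPairs A) = #A * #Aᶜ := by
  rw [cutPairs, card_image_of_injOn, card_product]
  rintro ⟨x, y⟩ hxy ⟨x', y'⟩ hxy' h
  simp only [coe_product, Set.mem_prod, mem_coe, coe_compl, Set.mem_compl_iff] at hxy hxy'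
  rcases Sym2.eq_iff.1 h with ⟨rfl, rfl⟩ | ⟨rfl, rfl⟩
  · rfl
  · exact absurd hxy.1 hxy'.2

end CutPairs

variable (G : SimpleGraph V) [DecidableRel G.Adj] (A : Finset V)

theorem eCross_eq_card_inter_cutPairs : eCross G A = #(G.edgeFinset ∩ cutPairs A) := by
  simp only [eCross, ← mem_cutPairs, filter_mem_eq_inter]

theorem eCross_compl : eCross G Aᶜ = eCross G A := by
  rw [eCross_eq_card_inter_cutPairs, eCross_eq_card_inter_cutPairs, cutPairs_compl]

theorem edgeFinset_seidel : (Seidel G A).edgeFinset = G.edgeFinset ∆ cutPairs A := by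
  ext e
  induction e using Sym2.ind with
  | _ x y =>
    simp only [mem_symmDiff, mem_edgeFinset, mem_edgeSet, mk_mem_cutPairs]
    change (x ≠ y ∧ _) ↔ _
    by_cases hxy : x = y
    · subst hxy; simp
    · tauto

theorem card_edgeFinset_seidel_add_two_mul_eCross :
    #(Seidel G A).edgeFinset + 2 * eCross G A = #G.edgeFinset + #A * #Aᶜ := by
  rw [edgeFinset_seidel, eCross_eq_card_inter_cutPairs, ← card_cutPairs,
    card_symmDiff_add_two_mul_card_inter]

theorem eCross_le_sum_degree : eCross G A ≤ ∑ v ∈ A, G.degree v := by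
  rw [eCross_eq_card_inter_cutPairs]
  calc #(G.edgeFinset ∩ cutPairs A)
      ≤ #(A.biUnion fun v => G.incidenceFinset v) := by
        refine card_le_card fun e he => ?_
        obtain ⟨he, hcut⟩ := mem_inter.1 he
        obtain ⟨x, hx, y, -, rfl⟩ := (mem_cutPairs A).1 hcut
        exact mem_biUnion.2
          ⟨x, hx, (G.mem_incidenceFinset _ _).2 ⟨mem_edgeFinset.1 he, Sym2.mem_mk_left x y⟩⟩
    _ ≤ ∑ v ∈ A, #(G.incidenceFinset v) := card_biUnion_le
    _ = ∑ v ∈ A, G.degree v := by simp only [card_incidenceFinset_eq_degree]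

theorem mul_eCross_le_of_forall_mul_degree_le {k m : ℕ} (h : ∀ v, k * G.degree v ≤ m) :
    k * eCross G A ≤ #A * m :=
  calc k * eCross G A ≤ ∑ v ∈ A, k * G.degree v := by
        rw [← mul_sum]; exact Nat.mul_le_mul_left k (eCross_le_sum_degree G A)
    _ ≤ ∑ _v ∈ A, m := sum_le_sum fun v _ => h v
    _ = #A * m := by rw [sum_const, smul_eq_mul]

end Switching

theorem switchMinimal_of_maxDegree_le [Fintype V] [DecidableEq V]
    (G : SimpleGraph V) [DecidableRel G.Adj]
    (h : ∀ v : V, 4 * G.degree v ≤ Fintype.card V) :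
    SwitchMinimal G := by
  intro A
  have hA := mul_eCross_le_of_forall_mul_degree_le G A h
  have hAc := mul_eCross_le_of_forall_mul_degree_le G Aᶜ h
  rw [eCross_compl] at hAc
  rw [← card_add_card_compl A] at hA hAc
  have hcross := Nat.two_mul_le_mul_of_four_mul_le hA hAc
  have hswitch := card_edgeFinset_seidel_add_two_mul_eCross G A
  omega
end

section
/- Let G be a connected 3-regular graph on 2n vertices. Let b be the minimum, over all partitions of V(G) into two sets of size n each, of the number of edges crossing the partition, and let c be the maximum, over all partitions of V(G) into two (possibly unbalanced) sets, of the number of non-edges of G crossing the partition (equivalently, edges of the complement of G crossing it). Then b = n² − c. -/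
open SimpleGraph Finset

variable {V : Type*}

/-!
For any vertex set `A`, the crossing edges of `G` and of `Gᶜ` together are all `#A * #Aᶜ` pairs,
so a minimum bisection yields `b + c ≥ n ^ 2`. Conversely, let `B` be the smaller side of a maximum
cut of `Gᶜ`, with `#B = n - k`. If `B ≠ ∅`, connectivity lets us add to `B`, `k` times, a
vertex `y` having a neighbour inside; since `deg y ≤ 3`, each step raises the number of crossing
edges of `G` by at most `3 - 2 = 1`. The resulting bisection shows `b ≤ eCross G B + k`, and
`eCross G B + c = (n - k) * (n + k)`, so `b + c ≤ n ^ 2` (for `B = ∅`, `c = 0` and `b ≤ n ^ 2`).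
-/

namespace SimpleGraph

section Interedges

variable {α : Type*} (G : SimpleGraph α) [DecidableRel G.Adj] {s₁ s₂ t₁ t₂ : Finset α}

theorem card_interedges_comm (s t : Finset α) :
    #(G.interedges s t) = #(G.interedges t s) :=
  have := G.symm
  Rel.card_interedges_comm s t

theorem card_interedges_singleton_left_le [Fintype α] (a : α) (t : Finset α) :
    #(G.interedges {a} t) ≤ G.degree a := by
  calc #(G.interedges {a} t) ≤ #({a} ×ˢ G.neighborFinset a) := by
        refine card_le_card fun ⟨b, c⟩ he => ?_
        obtain ⟨hb, -, hbc⟩ := G.mk_mem_interedges_iff.mp he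
        rw [mem_singleton] at hb
        subst hb
        exact mk_mem_product (mem_singleton_self b) ((G.mem_neighborFinset b c).mpr hbc)
    _ = G.degree a := by rw [card_product, card_singleton, one_mul, card_neighborFinset_eq_degree]

variable [DecidableEq α]

theorem card_interedges_union_left (h : Disjoint s₁ s₂) (t : Finset α) :
    #(G.interedges (s₁ ∪ s₂) t) = #(G.interedges s₁ t) + #(G.interedges s₂ t) := by
  rw [interedges_def, union_product, filter_union]
  exact card_union_of_disjoint (G.interedges_disjoint_left h t)

theorem card_interedges_union_right (s : Finset α) (h : Disjoint t₁ t₂) :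
    #(G.interedges s (t₁ ∪ t₂)) = #(G.interedges s t₁) + #(G.interedges s t₂) := by
  rw [interedges_def, product_union, filter_union]
  exact card_union_of_disjoint (G.interedges_disjoint_right s h)

end Interedges

variable [Fintype V] [DecidableEq V] (G : SimpleGraph V) [DecidableRel G.Adj]

theorem eCross_eq_card_interedges (A : Finset V) : eCross G A = #(G.interedges A Aᶜ) := by
  symm
  refine card_bij (fun p _ => s(p.1, p.2)) ?_ ?_ ?_
  · rintro ⟨x, y⟩ hp
    rw [mk_mem_interedges_iff, mem_compl] at hp
    simp only [mem_filter, mem_edgeFinset, mem_edgeSet]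
    exact ⟨hp.2.2, x, hp.1, y, hp.2.1, rfl⟩
  · rintro ⟨x, y⟩ hp ⟨x', y'⟩ hp' heq
    rw [mk_mem_interedges_iff, mem_compl] at hp hp'
    rcases Sym2.eq_iff.mp heq with ⟨rfl, rfl⟩ | ⟨rfl, rfl⟩
    · rfl
    · exact absurd hp.1 hp'.2.1
  · intro e he
    simp only [mem_filter, mem_edgeFinset] at he
    obtain ⟨hadj, x, hx, y, hy, rfl⟩ := he
    exact ⟨(x, y), G.mk_mem_interedges_iff.mpr ⟨hx, mem_compl.mpr hy, hadj⟩, rfl⟩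

theorem eCross_compl (A : Finset V) : eCross G Aᶜ = eCross G A := by
  rw [eCross_eq_card_interedges, eCross_eq_card_interedges, compl_compl, card_interedges_comm]

theorem eCross_add_eCross_compl (A : Finset V) : eCross G A + eCross Gᶜ A = #A * #Aᶜ := by
  rw [eCross_eq_card_interedges, eCross_eq_card_interedges,
    card_interedges_add_card_interedges_compl _ disjoint_compl_right]

theorem eCross_insert_add_le {A : Finset V} {y : V} (hy : y ∉ A) :
    eCross G (insert y A) + 2 * #(G.interedges A {y}) ≤ eCross G A + G.degree y := by
  set C := (insert y A)ᶜ
  have hAc : Aᶜ = {y} ∪ C := by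
    ext z
    rcases eq_or_ne z y with rfl | hzy <;> simp [C, *]
  have hyC : Disjoint {y} C := by simp [C]
  have hAC : Disjoint A C :=
    Finset.disjoint_left.mpr fun z hz hzC => Finset.mem_compl.mp hzC (mem_insert_of_mem hz)
  have hnew : eCross G (insert y A) = #(G.interedges {y} C) + #(G.interedges A C) := by
    rw [eCross_eq_card_interedges,
      ← card_interedges_union_left _ (disjoint_singleton_left.mpr hy), ← insert_eq]
  have hold : eCross G A = #(G.interedges A {y}) + #(G.interedges A C) := by
    rw [eCross_eq_card_interedges, hAc, card_interedges_union_right _ _ hyC]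
  have hdeg : #(G.interedges {y} A) + #(G.interedges {y} C) ≤ G.degree y := by
    rw [← card_interedges_union_right _ _ hAC]
    exact G.card_interedges_singleton_left_le y _
  rw [G.card_interedges_comm {y} A] at hdeg
  omega

theorem eCross_insert_le_add_one {A : Finset V} {x y : V} (hdeg : G.degree y ≤ 3) (hx : x ∈ A)
    (hy : y ∉ A) (hxy : G.Adj x y) : eCross G (insert y A) ≤ eCross G A + 1 := by
  have hedge : 0 < #(G.interedges A {y}) :=
    card_pos.mpr ⟨(x, y), G.mk_mem_interedges_iff.mpr ⟨hx, mem_singleton_self y, hxy⟩⟩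
  have := G.eCross_insert_add_le hy
  omega

theorem exists_card_eq_eCross_le (hconn : G.Connected) (hdeg : ∀ v, G.degree v ≤ 3)
    {A : Finset V} (hA : A.Nonempty) :
    ∀ k, #A + k ≤ Fintype.card V → ∃ B : Finset V, #B = #A + k ∧ eCross G B ≤ eCross G A + k
  | 0, _ => ⟨A, rfl, le_rfl⟩
  | k + 1, hk => by
    obtain ⟨B, hBcard, hB⟩ := exists_card_eq_eCross_le hconn hdeg hA k (by omega)
    obtain ⟨u, hu⟩ : B.Nonempty := card_pos.mp (by have := hA.card_pos; omega)
    obtain ⟨w, hw⟩ : Bᶜ.Nonempty := card_pos.mp (by rw [card_compl]; omega)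
    obtain ⟨d, -, hdB, hdB'⟩ :=
      (hconn u w).some.exists_boundary_dart (B : Set V) hu (Finset.mem_compl.mp hw)
    refine ⟨insert d.snd B, by rw [card_insert_of_notMem hdB', hBcard]; rfl, ?_⟩
    have := G.eCross_insert_le_add_one (hdeg d.snd) hdB hdB' d.adj
    omega

theorem exists_card_le_eCross_eq {n : ℕ} (hcard : Fintype.card V = 2 * n) (A : Finset V) :
    ∃ B : Finset V, #B ≤ n ∧ eCross G B = eCross G A := by
  by_cases hA : #A ≤ n
  · exact ⟨A, hA, rfl⟩
  · exact ⟨Aᶜ, by rw [card_compl]; omega, G.eCross_compl A⟩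

end SimpleGraph

theorem min_bisection_add_max_cut_compl [Fintype V] [DecidableEq V]
    (G : SimpleGraph V) [DecidableRel G.Adj] (n b c : ℕ)
    (hconn : G.Connected) (hreg : ∀ v : V, G.degree v = 3)
    (hcard : Fintype.card V = 2 * n)
    (hb₁ : ∃ A : Finset V, A.card = n ∧ eCross G A = b)
    (hb₂ : ∀ A : Finset V, A.card = n → b ≤ eCross G A)
    (hc₁ : ∃ A : Finset V, eCross Gᶜ A = c)
    (hc₂ : ∀ A : Finset V, eCross Gᶜ A ≤ c) :
    b + c = n ^ 2 := by
  obtain ⟨A₀, hA₀, rfl⟩ := hb₁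
  obtain ⟨A₁, rfl⟩ := hc₁
  have hbis : eCross G A₀ + eCross Gᶜ A₀ = n * n := by
    rw [G.eCross_add_eCross_compl, card_compl, hA₀, hcard, two_mul, Nat.add_sub_cancel]
  obtain ⟨B, hBn, hB⟩ := Gᶜ.exists_card_le_eCross_eq hcard A₁
  obtain ⟨k, rfl⟩ : ∃ k, n = #B + k := ⟨n - #B, by omega⟩
  have hcut : eCross G B + eCross Gᶜ A₁ = #B * (#B + 2 * k) := by
    rw [← hB, G.eCross_add_eCross_compl, card_compl, hcard]
    congr 1
    omega
  have hgrow : eCross G A₀ ≤ eCross G B + k ^ 2 := by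
    rcases B.eq_empty_or_nonempty with rfl | hBne
    · simp only [card_empty, zero_add] at hbis ⊢
      nlinarith
    · obtain ⟨C, hC, hCB⟩ :=
        G.exists_card_eq_eCross_le hconn (fun v => (hreg v).le) hBne k (by omega)
      have : k ≤ k ^ 2 := by nlinarith
      exact (hb₂ C hC).trans (by omega)
  have := hc₂ A₀
  nlinarith
end

section
/- Let G be a graph on n vertices, N ≥ n, and let G' be the graph with V(G') = V(G) ∪ Y ∪ Z, |Y| = |Z| = N, and E(G') = E(G) ∪ {yv : y ∈ Y, v ∈ V(G)}. Then G' is switching-minimal if and only if G is switching-minimal. -/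
open SimpleGraph Finset

variable {V : Type*}

/-- The graph `G'` obtained from `G` by adding a set `Y` of `N` vertices adjacent to all
vertices of `G`, and a set `Z` of `N` isolated vertices. -/
def extGraph (G : SimpleGraph V) (N : ℕ) : SimpleGraph (V ⊕ (Fin N ⊕ Fin N)) where
  Adj x y :=
    match x, y with
    | .inl a, .inl b => G.Adj a b
    | .inl _, .inr (.inl _) => True
    | .inr (.inl _), .inl _ => True
    | _, _ => False
  symm := by
    constructor
    rintro (a | i | i) (b | j | j) h <;> simp_all <;> exact h.symm
  loopless := by
    constructor
    rintro (a | i | i) h <;> simp_all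

instance extGraph.decidableAdj (G : SimpleGraph V) [DecidableRel G.Adj] (N : ℕ) :
    DecidableRel (extGraph G N).Adj := fun x y =>
  match x, y with
  | .inl a, .inl b => inferInstanceAs (Decidable (G.Adj a b))
  | .inl _, .inr (.inl _) => inferInstanceAs (Decidable True)
  | .inl _, .inr (.inr _) => inferInstanceAs (Decidable False)
  | .inr (.inl _), .inl _ => inferInstanceAs (Decidable True)
  | .inr (.inl _), .inr (.inl _) => inferInstanceAs (Decidable False)
  | .inr (.inl _), .inr (.inr _) => inferInstanceAs (Decidable False)
  | .inr (.inr _), .inl _ => inferInstanceAs (Decidable False)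
  | .inr (.inr _), .inr (.inl _) => inferInstanceAs (Decidable False)
  | .inr (.inr _), .inr (.inr _) => inferInstanceAs (Decidable False)

/-!
Switching on `A` removes the `e(A, Aᶜ)` edges across the cut and adds the `|A||Aᶜ| - e(A, Aᶜ)`
non-edges, so a graph is switching-minimal iff `2 e(A, Aᶜ) ≤ |A||Aᶜ|` for every `A`. In `G'`, a set
meeting `V`, `Y`, `Z` in `B`, `S`, `T` has `e(A, Aᶜ) = e_G(B, Bᶜ) + |B||Y \ S| + |V \ B||S|`. Taking
`S = T = ∅` gives back the condition for `G`; conversely the condition for `G` together with an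
inequality between the six part sizes, which needs `|V| ≤ N`, gives the condition for `G'`.
-/

lemma Finset.compl_disjSum {α β : Type*} [Fintype α] [Fintype β] [DecidableEq α]
    [DecidableEq β] (s : Finset α) (t : Finset β) : (s.disjSum t)ᶜ = sᶜ.disjSum tᶜ := by
  ext (a | b) <;> simp

lemma sum_sum_ite_mem_iff_notMem {α β : Type*} [Fintype α] [Fintype β] [DecidableEq α]
    [DecidableEq β] (P : Finset α) (Q : Finset β) :
    (∑ a, ∑ b, if (a ∈ P ↔ b ∉ Q) then 1 else 0 : ℕ) = #P * #Qᶜ + #Pᶜ * #Q := by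
  have inner (a : α) : (∑ b, if (a ∈ P ↔ b ∉ Q) then 1 else 0 : ℕ)
      = if a ∈ P then #Qᶜ else #Q := by
    rw [← card_filter]
    split_ifs with ha <;> congr 1 <;> ext <;> simp [ha]
  simp only [inner, sum_ite, sum_const, smul_eq_mul, ← compl_filter,
    filter_mem_eq_inter, univ_inter]

namespace SimpleGraph

variable [Fintype V] (G : SimpleGraph V) [DecidableRel G.Adj]

lemma two_mul_card_edgeFinset_eq_sum :
    2 * #G.edgeFinset = ∑ a, ∑ b, if G.Adj a b then 1 else 0 := by
  rw [two_mul_card_edgeFinset, card_filter, Fintype.sum_prod_type]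

variable [DecidableEq V]

/-- Ordered pairs, so this is twice the number of edges of `G` across the cut `(A, Aᶜ)`. -/
def crossAdjCount (A : Finset V) : ℕ :=
  ∑ a, ∑ b, if G.Adj a b ∧ (a ∈ A ↔ b ∉ A) then 1 else 0

lemma card_edgeFinset_seidel_add_crossAdjCount (A : Finset V) :
    #(Seidel G A).edgeFinset + G.crossAdjCount A = #G.edgeFinset + #A * #Aᶜ := by
  have pointwise (a b : V) :
      ((if (Seidel G A).Adj a b then 1 else 0) + 2 * if G.Adj a b ∧ (a ∈ A ↔ b ∉ A) then 1 else 0)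
        = (if G.Adj a b then 1 else 0) + if (a ∈ A ↔ b ∉ A) then 1 else 0 := by
    by_cases hab : a = b
    · subst hab; simp
    · simp only [Seidel, ne_eq, hab, not_false_eq_true, true_and]
      split_ifs <;> tauto
  have total : ∑ a, ∑ b, ((if (Seidel G A).Adj a b then 1 else 0)
      + 2 * if G.Adj a b ∧ (a ∈ A ↔ b ∉ A) then 1 else 0)
        = ∑ a, ∑ b, ((if G.Adj a b then 1 else 0) + if (a ∈ A ↔ b ∉ A) then 1 else 0) := by
    simp only [pointwise]
  simp only [sum_add_distrib, ← mul_sum] at total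
  rw [← two_mul_card_edgeFinset_eq_sum, ← crossAdjCount, ← two_mul_card_edgeFinset_eq_sum,
    sum_sum_ite_mem_iff_notMem] at total
  linarith

lemma switchMinimal_iff_crossAdjCount_le :
    SwitchMinimal G ↔ ∀ A, G.crossAdjCount A ≤ #A * #Aᶜ := by
  refine forall_congr' fun A => ?_
  have := G.card_edgeFinset_seidel_add_crossAdjCount A
  omega

lemma crossAdjCount_extGraph (N : ℕ) (B : Finset V) (S T : Finset (Fin N)) :
    (extGraph G N).crossAdjCount (B.disjSum (S.disjSum T))
      = G.crossAdjCount B + 2 * (#B * #Sᶜ + #Bᶜ * #S) := by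
  simp only [crossAdjCount, Fintype.sum_sum_type, extGraph, inl_mem_disjSum, inr_mem_disjSum,
    true_and, false_and, if_false, sum_const_zero, add_zero, sum_add_distrib,
    sum_sum_ite_mem_iff_notMem]
  ring

end SimpleGraph

/- With `d = s - t = t' - s'`, the right side minus the left is `(s + t) * (s' + t') - d * (b' - b)`,
where `|d| ≤ min (s + t) (s' + t')` and `|b' - b| ≤ N ≤ max (s + t) (s' + t')`. -/
lemma mul_add_two_mul_le_mul_of_add_le {b b' s s' t t' N : ℕ} (hb : b + b' ≤ N)
    (hs : s + s' = N) (ht : t + t' = N) :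
    b * b' + 2 * (b * s' + b' * s) ≤ (b + s + t) * (b' + s' + t') := by
  rcases le_total t s with h | h <;> rcases le_total (s + t) N with h' | h' <;> nlinarith

theorem extGraph_switchMinimal_iff [Fintype V] [DecidableEq V]
    (G : SimpleGraph V) [DecidableRel G.Adj] (N : ℕ) (hN : Fintype.card V ≤ N) :
    SwitchMinimal (extGraph G N) ↔ SwitchMinimal G := by
  simp only [switchMinimal_iff_crossAdjCount_le]
  constructor
  · intro h B
    have hA := h (B.disjSum ((∅ : Finset (Fin N)).disjSum ∅))
    simp only [crossAdjCount_extGraph, compl_disjSum, card_disjSum, compl_empty, card_empty,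
      card_univ, Fintype.card_fin] at hA
    linarith
  · intro h A
    obtain ⟨B, S, T, rfl⟩ : ∃ B S T, A = B.disjSum (S.disjSum T) :=
      ⟨A.toLeft, A.toRight.toLeft, A.toRight.toRight, by simp only [toLeft_disjSum_toRight]⟩
    have hB : #B + #Bᶜ ≤ N := (card_add_card_compl B).trans_le hN
    have hS : #S + #Sᶜ = N := by rw [card_add_card_compl, Fintype.card_fin]
    have hT : #T + #Tᶜ = N := by rw [card_add_card_compl, Fintype.card_fin]
    rw [crossAdjCount_extGraph, compl_disjSum, compl_disjSum, card_disjSum, card_disjSum,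
      card_disjSum, card_disjSum]
    linarith [h B, mul_add_two_mul_le_mul_of_add_le hB hS hT]
end

section
/- Let G be a graph on n vertices, N ≥ n, k an integer, and let G' be the graph with V(G') = V(G) ∪ Y ∪ Z, |Y| = |Z| = N, and E(G') = E(G) ∪ {yv : y ∈ Y, v ∈ V(G)}. Then G' is (≤ k + nN)-switchable if and only if G is (≤ k)-switchable. -/
open SimpleGraph Finset

variable {V : Type*}

/-- `G` is `(≤ k)`-switchable if some switch of `G` has at most `k` edges. -/
def SwitchableLE [Fintype V] [DecidableEq V] (G : SimpleGraph V) [DecidableRel G.Adj] (k : ℕ) : Prop :=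
  ∃ A : Finset V, (Seidel G A).edgeFinset.card ≤ k

/-!
A switching set of `G'` splits as `P ⊔ Y₀ ⊔ Z₀` with `P ⊆ V(G)`, `Y₀ ⊆ Y`, `Z₀ ⊆ Z`. Inside `V(G)`
the switch is `S(G, P)`; every other pair of `G'` is an edge of the switch according only to the
sides of its endpoints, so with `p, y, z` the sizes of `P, Y₀, Z₀` and `p', y', z'` those of their
complements, the switch has `|S(G, P)| + py + p'y' + pz' + p'z + yy' + zz' + yz' + y'z` edges.
For `p + p' = n ≤ N = y + y' = z + z'` the second summand exceeds `nN` by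
`(p - p')(y - z) + (y + z)(y' + z')`, which is nonnegative: `|p - p'| ≤ N`, and `|y - z|` is at most both
`y + z` and `y' + z'`, whose sum is `2N`. It equals `nN` when `Y₀ = Z₀ = ∅`.
-/

namespace Finset

variable {α β : Type*} [Fintype α] [Fintype β] [DecidableEq α] [DecidableEq β]

theorem sum_sum_boole_mem_iff_mem (s : Finset α) (t : Finset β) :
    ∑ a, ∑ b, (if (a ∈ s ↔ b ∈ t) then 1 else 0) = #s * #t + #sᶜ * #tᶜ := by
  have row (a : α) :
      ∑ b, (if (a ∈ s ↔ b ∈ t) then 1 else 0) = if a ∈ s then #t else #tᶜ := by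
    by_cases ha : a ∈ s
    · simp only [ha, true_iff, if_true, sum_boole, filter_univ_mem, Nat.cast_id]
    · simp only [ha, false_iff, if_false, sum_boole, ← mem_compl, filter_univ_mem, Nat.cast_id]
  simp only [row, sum_ite, sum_const, smul_eq_mul, ← mem_compl, filter_univ_mem]

theorem sum_sum_boole_mem_xor_mem (s : Finset α) (t : Finset β) :
    ∑ a, ∑ b, (if ¬(a ∈ s ↔ b ∈ t) then 1 else 0) = #s * #tᶜ + #sᶜ * #t := by
  simpa only [not_iff, ← mem_compl, compl_compl, add_comm] using sum_sum_boole_mem_iff_mem sᶜ t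

theorem sum_sum_boole_ne_and_mem_xor_mem (s : Finset α) :
    ∑ a, ∑ b, (if a ≠ b ∧ ¬(a ∈ s ↔ b ∈ s) then 1 else 0) = #s * #sᶜ + #sᶜ * #s := by
  rw [← sum_sum_boole_mem_xor_mem]
  refine sum_congr rfl fun a _ => sum_congr rfl fun b _ => if_congr ?_ rfl rfl
  exact and_iff_right_of_imp fun hab h => hab (h ▸ Iff.rfl)

end Finset

theorem SimpleGraph.two_mul_card_edgeFinset_eq_sum_sum_boole {W : Type*} [Fintype W]
    [DecidableEq W] (H : SimpleGraph W) [DecidableRel H.Adj] :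
    2 * #H.edgeFinset = ∑ x, ∑ y, if H.Adj x y then 1 else 0 := by
  rw [← sum_degrees_eq_twice_card_edges]
  simp [← card_neighborFinset_eq_degree, neighborFinset_eq_filter, sum_boole]

theorem seidel_adj {W : Type*} (H : SimpleGraph W) (A : Finset W) (x y : W) :
    (Seidel H A).Adj x y ↔ x ≠ y ∧ (H.Adj x y ↔ (x ∈ A ↔ y ∈ A)) := Iff.rfl

theorem card_edgeFinset_seidel_extGraph [Fintype V] [DecidableEq V] (G : SimpleGraph V)
    [DecidableRel G.Adj] (N : ℕ) (P : Finset V) (Y Z : Finset (Fin N)) :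
    #(Seidel (extGraph G N) (P.disjSum (Y.disjSum Z))).edgeFinset =
      #(Seidel G P).edgeFinset + (#P * #Y + #Pᶜ * #Yᶜ + #P * #Zᶜ + #Pᶜ * #Z
        + #Y * #Yᶜ + #Z * #Zᶜ + #Y * #Zᶜ + #Yᶜ * #Z) := by
  suffices 2 * #(Seidel (extGraph G N) (P.disjSum (Y.disjSum Z))).edgeFinset =
      2 * #(Seidel G P).edgeFinset + 2 * (#P * #Y + #Pᶜ * #Yᶜ + #P * #Zᶜ + #Pᶜ * #Z
        + #Y * #Yᶜ + #Z * #Zᶜ + #Y * #Zᶜ + #Yᶜ * #Z) by omega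
  rw [two_mul_card_edgeFinset_eq_sum_sum_boole, two_mul_card_edgeFinset_eq_sum_sum_boole]
  simp only [Fintype.sum_sum_type, sum_add_distrib, seidel_adj, extGraph, inl_mem_disjSum,
    inr_mem_disjSum, ne_eq, reduceCtorEq, not_false_eq_true, true_and, Sum.inl.injEq,
    Sum.inr.injEq, true_iff, false_iff]
  simp only [← ne_eq, sum_sum_boole_mem_iff_mem, sum_sum_boole_mem_xor_mem,
    sum_sum_boole_ne_and_mem_xor_mem]
  ring

theorem add_mul_le_cross_terms (p q y y' z z' N : ℕ) (hn : p + q ≤ N) (hy : y + y' = N)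
    (hz : z + z' = N) :
    (p + q) * N ≤ p * y + q * y' + p * z' + q * z + y * y' + z * z' + y * z' + y' * z := by
  subst hy
  rcases le_total z y with h | h
  · obtain ⟨d, rfl⟩ := Nat.exists_eq_add_of_le h
    obtain rfl : z' = y' + d := by omega
    nlinarith
  · obtain ⟨d, rfl⟩ := Nat.exists_eq_add_of_le h
    obtain rfl : y' = z' + d := by omega
    nlinarith

theorem extGraph_switchableLE_iff [Fintype V] [DecidableEq V]
    (G : SimpleGraph V) [DecidableRel G.Adj] (N k : ℕ) (hN : Fintype.card V ≤ N) :
    SwitchableLE (extGraph G N) (k + Fintype.card V * N) ↔ SwitchableLE G k := by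
  have hV (P : Finset V) : #P + #Pᶜ = Fintype.card V := card_add_card_compl P
  have hN' (Y : Finset (Fin N)) : #Y + #Yᶜ = N := by rw [card_add_card_compl, Fintype.card_fin]
  constructor
  · rintro ⟨A, hA⟩
    rw [← A.toLeft_disjSum_toRight, ← A.toRight.toLeft_disjSum_toRight,
      card_edgeFinset_seidel_extGraph] at hA
    have hcross := add_mul_le_cross_terms _ _ _ _ _ _ N ((hV A.toLeft).trans_le hN)
      (hN' A.toRight.toLeft) (hN' A.toRight.toRight)
    rw [hV] at hcross
    exact ⟨A.toLeft, by linarith⟩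
  · rintro ⟨A, hA⟩
    refine ⟨A.disjSum (disjSum ∅ ∅), ?_⟩
    rw [card_edgeFinset_seidel_extGraph, ← hV A]
    simp only [compl_empty, card_empty, card_univ, Fintype.card_fin]
    linarith [add_mul #A #Aᶜ N]
end
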